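/- arXiv:2308.14627 — 4 statements merged into one kernel-verified Lean document; each statement's English description precedes it below -/
import Mathlib

section
/- For every privacy budget ε > 0, scale h > 0, center H̄ ∈ ℝ, bias Ā ∈ ℝ, and input x ∈ [H̄−h, H̄+h], the Zeal density g_x is nonnegative and integrates to 1 over ℝ, i.e., ∫ g_x(t) dt = 1; hence g_x is a probability density function. -/
open MeasureTheory Real

/-- Probability level `p` of the Zeal piecewise density. -/
noncomputable def zealP (ε h : ℝ) : ℝ :=
  (Real.exp ε - Real.exp (ε / 2)) / (2 * h * (Real.exp (ε / 2) + 1))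

/-- Output half-width `C` of the Zeal mechanism. -/
noncomputable def zealC (ε h : ℝ) : ℝ :=
  h * (Real.exp (ε / 2) + 1) / (Real.exp (ε / 2) - 1)

/-- Left endpoint `L(x)` of the central (high-probability) band. -/
noncomputable def zealL (ε h H A x : ℝ) : ℝ :=
  (zealC ε h + h) / 2 * ((x - H) / h) - (zealC ε h - h) / 2 + H + A

/-- Right endpoint `R(x)` of the central band. -/
noncomputable def zealR (ε h H A x : ℝ) : ℝ :=
  zealL ε h H A x + zealC ε h - h

/-- The Zeal probability density `g_x` with parameters `(ε, h, H̄, Ā)`. -/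
noncomputable def zealG (ε h H A x t : ℝ) : ℝ :=
  if H - zealC ε h + A ≤ t ∧ t < zealL ε h H A x then zealP ε h / Real.exp ε
  else if zealL ε h H A x ≤ t ∧ t ≤ zealR ε h H A x then zealP ε h
  else if zealR ε h H A x < t ∧ t ≤ H + zealC ε h + A then zealP ε h / Real.exp ε
  else 0

/-!
`g_x` is a step function: height `p` on the band `[L(x), R(x)]` of width `C - h`, and height
`p / e^ε` on the rest of `[x*min, x*max]`, of total width `2C - (C - h) = C + h`; neither width
depends on `x`. With `s = e^(ε/2)` one has `p (C - h) = s / (s + 1)` and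
`p e^(-ε) (C + h) = 1 / (s + 1)`, which add up to `1`.
-/

noncomputable def plateau (a l r b p q t : ℝ) : ℝ :=
  if a ≤ t ∧ t < l then q
  else if l ≤ t ∧ t ≤ r then p
  else if r < t ∧ t ≤ b then q
  else 0

section Plateau

variable {a l r b p q : ℝ}

theorem plateau_nonneg (hp : 0 ≤ p) (hq : 0 ≤ q) (t : ℝ) :
    0 ≤ plateau a l r b p q t := by
  unfold plateau
  split_ifs <;> first | assumption | exact le_rfl

theorem plateau_eq_indicator_add_indicator (hal : a ≤ l) (hlr : l ≤ r) (hrb : r ≤ b) :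
    plateau a l r b p q =
      (Set.Icc a b).indicator (fun _ => q) + (Set.Icc l r).indicator (fun _ => p - q) := by
  funext t
  simp only [plateau, Pi.add_apply, Set.indicator, Set.mem_Icc]
  split_ifs <;> grind

theorem integral_plateau (hal : a ≤ l) (hlr : l ≤ r) (hrb : r ≤ b) :
    ∫ t, plateau a l r b p q t = q * (b - a) + (p - q) * (r - l) := by
  rw [plateau_eq_indicator_add_indicator hal hlr hrb, Pi.add_def,
    integral_add ((integrableOn_const measure_Icc_lt_top.ne).integrable_indicator measurableSet_Icc)
      ((integrableOn_const measure_Icc_lt_top.ne).integrable_indicator measurableSet_Icc),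
    integral_indicator_const _ measurableSet_Icc, integral_indicator_const _ measurableSet_Icc,
    Real.volume_real_Icc_of_le (hal.trans (hlr.trans hrb)), Real.volume_real_Icc_of_le hlr]
  simp only [smul_eq_mul]
  ring

end Plateau

theorem zealG_eq_plateau (ε h H A x : ℝ) :
    zealG ε h H A x = plateau (H - zealC ε h + A) (zealL ε h H A x) (zealR ε h H A x)
      (H + zealC ε h + A) (zealP ε h) (zealP ε h / exp ε) :=
  rfl

section Zeal

variable {ε h : ℝ}

theorem exp_half_sub_one_ne_zero (hε : ε ≠ 0) : exp (ε / 2) - 1 ≠ 0 :=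
  sub_ne_zero.2 (by simpa using hε)

theorem zealC_sub_self (hε : ε ≠ 0) : zealC ε h - h = 2 * h / (exp (ε / 2) - 1) := by
  have := exp_half_sub_one_ne_zero hε
  rw [zealC]
  field_simp
  ring

theorem zealC_add_self (hε : ε ≠ 0) :
    zealC ε h + h = 2 * h * exp (ε / 2) / (exp (ε / 2) - 1) := by
  have := exp_half_sub_one_ne_zero hε
  rw [zealC]
  field_simp
  ring

theorem self_lt_zealC (hε : 0 < ε) (hh : 0 < h) : h < zealC ε h := by
  have hs : 0 < exp (ε / 2) - 1 := sub_pos.2 (one_lt_exp_iff.2 (half_pos hε))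
  have hgap : 0 < zealC ε h - h := by rw [zealC_sub_self hε.ne']; positivity
  linarith

theorem zealP_pos (hε : 0 < ε) (hh : 0 < h) : 0 < zealP ε h := by
  have : exp (ε / 2) < exp ε := exp_lt_exp.2 (half_lt_self hε)
  unfold zealP
  exact div_pos (sub_pos.2 this) (by positivity)

theorem zealP_mul_add_zealP_div_mul (hε : ε ≠ 0) (hh : h ≠ 0) :
    zealP ε h * (zealC ε h - h) + zealP ε h / exp ε * (zealC ε h + h) = 1 := by
  have := exp_half_sub_one_ne_zero hε
  have hexp : exp ε = exp (ε / 2) * exp (ε / 2) := by rw [← exp_add, add_halves]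
  rw [zealC_sub_self hε, zealC_add_self hε, zealP, hexp]
  have : exp (ε / 2) + 1 ≠ 0 := by positivity
  field_simp

theorem zealR_sub_zealL (H A x : ℝ) : zealR ε h H A x - zealL ε h H A x = zealC ε h - h := by
  rw [zealR]
  ring

variable {H A x : ℝ}

theorem le_zealL (hε : 0 < ε) (hh : 0 < h) (hx : H - h ≤ x) :
    H - zealC ε h + A ≤ zealL ε h H A x := by
  have hxH : -1 ≤ (x - H) / h := by rw [le_div_iff₀ hh]; linarith
  have hC := self_lt_zealC hε hh
  have : 0 ≤ (zealC ε h + h) / 2 * ((x - H) / h + 1) := by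
    apply mul_nonneg <;> linarith
  rw [zealL]
  linarith

theorem zealR_le (hε : 0 < ε) (hh : 0 < h) (hx : x ≤ H + h) :
    zealR ε h H A x ≤ H + zealC ε h + A := by
  have hxH : (x - H) / h ≤ 1 := by rw [div_le_one hh]; linarith
  have hC := self_lt_zealC hε hh
  have : 0 ≤ (zealC ε h + h) / 2 * (1 - (x - H) / h) := by
    apply mul_nonneg <;> linarith
  rw [zealR, zealL]
  linarith

end Zeal

/-- the Zeal density is nonnegative and integrates to 1. -/
theorem zeal_density_is_pdf (ε h H A x : ℝ) (hε : 0 < ε) (hh : 0 < h)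
    (hx : x ∈ Set.Icc (H - h) (H + h)) :
    (∀ t : ℝ, 0 ≤ zealG ε h H A x t) ∧ (∫ t : ℝ, zealG ε h H A x t) = 1 := by
  have hp := zealP_pos hε hh
  rw [zealG_eq_plateau]
  refine ⟨plateau_nonneg hp.le (div_pos hp (exp_pos ε)).le, ?_⟩
  have hLR : zealL ε h H A x ≤ zealR ε h H A x := by
    linarith [zealR_sub_zealL (ε := ε) (h := h) H A x, self_lt_zealC hε hh]
  rw [integral_plateau (le_zealL hε hh hx.1) hLR (zealR_le hε hh hx.2), zealR_sub_zealL,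
    ← zealP_mul_add_zealP_div_mul hε.ne' hh.ne']
  ring
end

section
/- The Zeal perturbator is ε-locally differentially private: for every privacy budget ε > 0, scale h > 0, center H̄ ∈ ℝ, bias Ā ∈ ℝ, any two inputs x, x' ∈ [H̄−h, H̄+h], and every t ∈ ℝ, the densities satisfy g_x(t) ≤ e^ε · g_{x'}(t). -/
open MeasureTheory Real

/-- the Zeal perturbator is ε-locally differentially private. -/
theorem zeal_is_ldp (ε h H A : ℝ) (hε : 0 < ε) (hh : 0 < h)
    (x x' : ℝ) (hx : x ∈ Set.Icc (H - h) (H + h)) (hx' : x' ∈ Set.Icc (H - h) (H + h))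
    (t : ℝ) :
    zealG ε h H A x t ≤ Real.exp ε * zealG ε h H A x' t := by
  have hE : (1:ℝ) < Real.exp (ε/2) := by nlinarith [Real.add_one_le_exp (ε/2)]
  have hε1 : (1:ℝ) ≤ Real.exp ε := Real.one_le_exp hε.le
  have hεpos := Real.exp_pos ε
  have hP : 0 ≤ zealP ε h := by
    unfold zealP
    apply div_nonneg
    · have := Real.exp_le_exp.mpr (show ε/2 ≤ ε by linarith); linarith
    · nlinarith
  have hC : h ≤ zealC ε h := by
    unfold zealC
    rw [le_div_iff₀ (by linarith)]
    nlinarith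
  have hbound : ∀ y ∈ Set.Icc (H-h) (H+h),
      H - zealC ε h + A ≤ zealL ε h H A y ∧ zealR ε h H A y ≤ H + zealC ε h + A := by
    intro y hy
    obtain ⟨hy1, hy2⟩ := hy
    have hu1 : (-1:ℝ) ≤ (y - H)/h := by rw [le_div_iff₀ hh]; linarith
    have hu2 : (y - H)/h ≤ 1 := by rw [div_le_one hh]; linarith
    unfold zealR zealL
    constructor
    · nlinarith [mul_nonneg (show (0:ℝ) ≤ (zealC ε h + h)/2 by linarith)
        (show (0:ℝ) ≤ (y - H)/h + 1 by linarith)]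
    · nlinarith [mul_nonneg (show (0:ℝ) ≤ (zealC ε h + h)/2 by linarith)
        (show (0:ℝ) ≤ 1 - (y - H)/h by linarith)]
  have hgnn : ∀ y s, 0 ≤ zealG ε h H A y s := by
    intro y s
    unfold zealG
    split_ifs <;> positivity
  have hgle : zealG ε h H A x t ≤ zealP ε h := by
    unfold zealG
    split_ifs
    · exact div_le_self hP hε1
    · exact le_refl _
    · exact div_le_self hP hε1
    · exact hP
  by_cases hz : zealG ε h H A x t = 0
  · rw [hz]; exact mul_nonneg hεpos.le (hgnn x' t)
  · have hsupp : H - zealC ε h + A ≤ t ∧ t ≤ H + zealC ε h + A := by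
      obtain ⟨hLx, hRx⟩ := hbound x hx
      unfold zealG at hz
      split_ifs at hz with h1 h2 h3
      · constructor
        · exact h1.1
        · have := h1.2
          have : zealL ε h H A x ≤ zealR ε h H A x := by unfold zealR; linarith
          linarith [h1.2]
      · constructor
        · linarith [h2.1]
        · linarith [h2.2]
      · constructor
        · have : zealL ε h H A x ≤ zealR ε h H A x := by unfold zealR; linarith
          linarith [h3.1]
        · exact h3.2
      · exact absurd rfl hz
    have hglow : zealP ε h / Real.exp ε ≤ zealG ε h H A x' t := by
      unfold zealG
      split_ifs with h1 h2 h3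
      · exact le_refl _
      · exact div_le_self hP hε1
      · exact le_refl _
      · push_neg at h1 h2 h3
        exfalso
        have hL := h1 hsupp.1
        have hR := h2 hL
        have := h3 hR
        linarith [hsupp.2]
    calc zealG ε h H A x t ≤ zealP ε h := hgle
      _ = Real.exp ε * (zealP ε h / Real.exp ε) := by field_simp
      _ ≤ Real.exp ε * zealG ε h H A x' t := by
          exact mul_le_mul_of_nonneg_left hglow hεpos.le
end

section
/- (Theorem 1) For every privacy budget ε > 0, scale h > 0, center H̄ ∈ ℝ, bias Ā ∈ ℝ, and input x ∈ [H̄−h, H̄+h], the expected value of the Zeal output x* = f*(x, Ā) equals x + Ā; that is, ∫ t · g_x(t) dt = x + Ā. -/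
open MeasureTheory Real

lemma zeal_key (p q a L R b : ℝ) (haL : a ≤ L) (hLR : L ≤ R) (hRb : R ≤ b) :
    (∫ t : ℝ, t * (if a ≤ t ∧ t < L then q else if L ≤ t ∧ t ≤ R then p
        else if R < t ∧ t ≤ b then q else 0))
      = q * (L^2 - a^2)/2 + p * (R^2 - L^2)/2 + q * (b^2 - R^2)/2 := by
  have hfun : (fun t : ℝ => t * (if a ≤ t ∧ t < L then q else if L ≤ t ∧ t ≤ R then p
        else if R < t ∧ t ≤ b then q else 0))
      = fun t => (Set.Ico a L).indicator (fun t => t * q) t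
        + (Set.Icc L R).indicator (fun t => t * p) t
        + (Set.Ioc R b).indicator (fun t => t * q) t := by
    funext t
    by_cases h1 : a ≤ t ∧ t < L <;> by_cases h2 : L ≤ t ∧ t ≤ R <;>
      by_cases h3 : R < t ∧ t ≤ b <;>
      simp [Set.indicator_apply, Set.mem_Ico, Set.mem_Icc, Set.mem_Ioc, h1, h2, h3] <;>
      first
      | (exact absurd h2.1 (not_le.2 h1.2))
      | (exact absurd h3.1 (not_lt.2 (h1.2.le.trans hLR)))
      | (exact absurd h3.1 (not_lt.2 h2.2))
  have i1 : IntegrableOn (fun t : ℝ => t * q) (Set.Ico a L) :=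
    ((continuous_id.mul continuous_const).integrableOn_Icc).mono_set Set.Ico_subset_Icc_self
  have i2 : IntegrableOn (fun t : ℝ => t * p) (Set.Icc L R) :=
    (continuous_id.mul continuous_const).integrableOn_Icc
  have i3 : IntegrableOn (fun t : ℝ => t * q) (Set.Ioc R b) :=
    ((continuous_id.mul continuous_const).integrableOn_Icc).mono_set Set.Ioc_subset_Icc_self
  have hI1 : Integrable (fun t : ℝ => (Set.Ico a L).indicator (fun t => t * q) t) :=
    i1.integrable_indicator measurableSet_Ico
  have hI2 : Integrable (fun t : ℝ => (Set.Icc L R).indicator (fun t => t * p) t) :=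
    i2.integrable_indicator measurableSet_Icc
  have hI3 : Integrable (fun t : ℝ => (Set.Ioc R b).indicator (fun t => t * q) t) :=
    i3.integrable_indicator measurableSet_Ioc
  have hI12 : Integrable (fun t : ℝ => (Set.Ico a L).indicator (fun t => t * q) t
      + (Set.Icc L R).indicator (fun t => t * p) t) := hI1.add hI2
  rw [hfun, integral_add hI12 hI3, integral_add hI1 hI2,
    integral_indicator measurableSet_Ico, integral_indicator measurableSet_Icc,
    integral_indicator measurableSet_Ioc,
    ← integral_Icc_eq_integral_Ico, integral_Icc_eq_integral_Ioc, integral_Icc_eq_integral_Ioc,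
    ← intervalIntegral.integral_of_le haL, ← intervalIntegral.integral_of_le hLR,
    ← intervalIntegral.integral_of_le hRb]
  simp [intervalIntegral.integral_mul_const, integral_id]
  ring


/-- Theorem 1: the expected value of the Zeal output is `x + Ā`. -/
theorem zeal_expected_value (ε h H A x : ℝ) (hε : 0 < ε) (hh : 0 < h)
    (hx : x ∈ Set.Icc (H - h) (H + h)) :
    (∫ t : ℝ, t * zealG ε h H A x t) = x + A := by
  obtain ⟨hx1, hx2⟩ := hx
  have hE1 : 1 < Real.exp (ε / 2) := by
    have := Real.add_one_le_exp (ε / 2)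
    linarith
  have hE0 : (0:ℝ) < Real.exp (ε / 2) := by linarith
  have hEE : Real.exp ε = Real.exp (ε / 2) * Real.exp (ε / 2) := by
    rw [← Real.exp_add]; ring_nf
  have hu1 : -1 ≤ (x - H) / h := by
    rw [le_div_iff₀ hh]; linarith
  have hu2 : (x - H) / h ≤ 1 := by
    rw [div_le_one hh]; linarith
  have hCh : h ≤ zealC ε h := by
    rw [zealC, le_div_iff₀ (by linarith)]
    nlinarith
  have haL : H - zealC ε h + A ≤ zealL ε h H A x := by
    rw [zealL]
    nlinarith [hCh]
  have hLR : zealL ε h H A x ≤ zealR ε h H A x := by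
    rw [zealR]; linarith
  have hRb : zealR ε h H A x ≤ H + zealC ε h + A := by
    rw [zealR, zealL]
    nlinarith [hCh]
  have hkey := zeal_key (zealP ε h) (zealP ε h / Real.exp ε) (H - zealC ε h + A)
    (zealL ε h H A x) (zealR ε h H A x) (H + zealC ε h + A) haL hLR hRb
  have hgeq : (∫ t : ℝ, t * zealG ε h H A x t)
      = ∫ t : ℝ, t * (if H - zealC ε h + A ≤ t ∧ t < zealL ε h H A x then zealP ε h / Real.exp ε
        else if zealL ε h H A x ≤ t ∧ t ≤ zealR ε h H A x then zealP ε h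
        else if zealR ε h H A x < t ∧ t ≤ H + zealC ε h + A then zealP ε h / Real.exp ε
        else 0) := rfl
  rw [hgeq, hkey]
  have hEne : Real.exp (ε / 2) - 1 ≠ 0 := by linarith
  have hEne' : Real.exp (ε / 2) + 1 ≠ 0 := by linarith
  have hEne0 : Real.exp (ε / 2) ≠ 0 := ne_of_gt hE0
  rw [zealR, zealL, zealP, zealC, hEE]
  field_simp
  ring
end

section
/- (Theorem 2) For every privacy budget ε > 0, scale h > 0, center H̄ ∈ ℝ, bias Ā ∈ ℝ, and input x ∈ [H̄−h, H̄+h], the variance of the Zeal output x* = f*(x, Ā) equals h² · ( ((x−H̄)/h)² / (e^{ε/2}−1) + (e^{ε/2}+3) / (3·(e^{ε/2}−1)²) ); that is, ∫ (t − (x+Ā))² · g_x(t) dt equals this expression. -/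
open MeasureTheory Real

set_option maxHeartbeats 2000000 in
/-- Theorem 2: the variance of the Zeal output. -/
theorem zeal_variance (ε h H A x : ℝ) (hε : 0 < ε) (hh : 0 < h)
    (hx : x ∈ Set.Icc (H - h) (H + h)) :
    (∫ t : ℝ, (t - (x + A)) ^ 2 * zealG ε h H A x t) =
      h ^ 2 * (((x - H) / h) ^ 2 / (Real.exp (ε / 2) - 1) +
        (Real.exp (ε / 2) + 3) / (3 * (Real.exp (ε / 2) - 1) ^ 2)) := by
  obtain ⟨hx1, hx2⟩ := hx
  have hs1 : 1 < Real.exp (ε / 2) := by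
    have h0 : (0:ℝ) < ε / 2 := by linarith
    calc (1:ℝ) = Real.exp 0 := Real.exp_zero.symm
      _ < _ := Real.exp_lt_exp.mpr h0
  set s := Real.exp (ε / 2) with hsdef
  have hE : Real.exp ε = s * s := by
    rw [hsdef, ← Real.exp_add]; ring_nf
  have hsm : (0:ℝ) < s - 1 := by linarith
  have hsp : (0:ℝ) < s + 1 := by linarith
  set m := x + A with hm
  set C := zealC ε h with hCdef
  have hC : C = h * (s + 1) / (s - 1) := rfl
  have hCh : h < C := by
    have e : C - h = 2 * h / (s - 1) := by rw [hC]; field_simp; ring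
    nlinarith [div_pos (show (0:ℝ) < 2 * h by linarith) hsm]
  set L := zealL ε h H A x with hLdef
  set R := zealR ε h H A x with hRdef
  have hL : L = (C + h) / 2 * ((x - H) / h) - (C - h) / 2 + H + A := rfl
  have hR : R = L + C - h := rfl
  set xm := H - C + A with hxmdef
  set xM := H + C + A with hxMdef
  have hxmL : xm ≤ L := by
    have e : L - xm = (C + h) / (2 * h) * (x - H + h) := by
      rw [hL, hxmdef]; field_simp; ring
    nlinarith [mul_nonneg (show (0:ℝ) ≤ (C + h) / (2 * h) by
        apply div_nonneg <;> linarith)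
      (show (0:ℝ) ≤ x - H + h by linarith)]
  have hLR : L ≤ R := by rw [hR]; linarith
  have hRxM : R ≤ xM := by
    have e : xM - R = (C + h) / (2 * h) * (H + h - x) := by
      rw [hR, hL, hxMdef]; field_simp; ring
    nlinarith [mul_nonneg (show (0:ℝ) ≤ (C + h) / (2 * h) by
        apply div_nonneg <;> linarith)
      (show (0:ℝ) ≤ H + h - x by linarith)]
  have hxmxM : xm ≤ xM := by linarith
  set P := zealP ε h with hPdef
  have hP : P = (s * s - s) / (2 * h * (s + 1)) := by
    rw [hPdef]; simp only [zealP, ← hsdef, hE]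
  set c1 := P / (s * s) with hc1
  set c2 := P - P / (s * s) with hc2
  have key : ∀ t : ℝ, (t - m) ^ 2 * zealG ε h H A x t =
      Set.indicator (Set.Icc xm xM) (fun t => c1 * (t - m) ^ 2) t +
      Set.indicator (Set.Icc L R) (fun t => c2 * (t - m) ^ 2) t := by
    intro t
    simp only [zealG, hE, ← hsdef, ← hPdef, ← hLdef, ← hRdef, ← hCdef, ← hxmdef, ← hxMdef]
    rcases lt_or_ge t xm with h1 | h1
    · rw [if_neg (by rintro ⟨a, -⟩; linarith), if_neg (by rintro ⟨a, -⟩; linarith),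
        if_neg (by rintro ⟨a, -⟩; linarith),
        Set.indicator_of_notMem (by simp only [Set.mem_Icc, not_and, not_le]; intro a; linarith),
        Set.indicator_of_notMem (by simp only [Set.mem_Icc, not_and, not_le]; intro a; linarith)]
      ring
    · rcases lt_or_ge t L with h2 | h2
      · rw [if_pos ⟨h1, h2⟩,
          Set.indicator_of_mem (Set.mem_Icc.mpr ⟨h1, by linarith⟩),
          Set.indicator_of_notMem (by simp only [Set.mem_Icc, not_and, not_le]; intro a; linarith)]
        rw [hc1]; ring
      · rcases le_or_gt t R with h3 | h3
        · rw [if_neg (by rintro ⟨-, b⟩; linarith), if_pos ⟨h2, h3⟩,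
            Set.indicator_of_mem (Set.mem_Icc.mpr ⟨h1, by linarith⟩),
            Set.indicator_of_mem (Set.mem_Icc.mpr ⟨h2, h3⟩)]
          rw [hc1, hc2]; ring
        · rcases le_or_gt t xM with h4 | h4
          · rw [if_neg (by rintro ⟨-, b⟩; linarith), if_neg (by rintro ⟨-, b⟩; linarith),
              if_pos ⟨h3, h4⟩,
              Set.indicator_of_mem (Set.mem_Icc.mpr ⟨h1, h4⟩),
              Set.indicator_of_notMem (by simp only [Set.mem_Icc, not_and, not_le]; intro a; linarith)]
            rw [hc1]; ring
          · rw [if_neg (by rintro ⟨-, b⟩; linarith), if_neg (by rintro ⟨-, b⟩; linarith),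
              if_neg (by rintro ⟨-, b⟩; linarith),
              Set.indicator_of_notMem (by simp only [Set.mem_Icc, not_and, not_le]; intro a; linarith),
              Set.indicator_of_notMem (by simp only [Set.mem_Icc, not_and, not_le]; intro a; linarith)]
            ring
  have i1 : Integrable (fun t => Set.indicator (Set.Icc xm xM) (fun t => c1 * (t - m) ^ 2) t) := by
    rw [integrable_indicator_iff measurableSet_Icc]
    exact (Continuous.integrableOn_Icc (by fun_prop))
  have i2 : Integrable (fun t => Set.indicator (Set.Icc L R) (fun t => c2 * (t - m) ^ 2) t) := by
    rw [integrable_indicator_iff measurableSet_Icc]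
    exact (Continuous.integrableOn_Icc (by fun_prop))
  have ev : ∀ a b c : ℝ, (∫ t in a..b, c * (t - m) ^ 2) = c * ((b - m) ^ 3 - (a - m) ^ 3) / 3 := by
    intro a b c
    rw [intervalIntegral.integral_const_mul,
      intervalIntegral.integral_comp_sub_right (fun t => t ^ 2) m,
      integral_pow]
    norm_num; ring
  calc (∫ t : ℝ, (t - m) ^ 2 * zealG ε h H A x t)
      = ∫ t : ℝ, (Set.indicator (Set.Icc xm xM) (fun t => c1 * (t - m) ^ 2) t +
          Set.indicator (Set.Icc L R) (fun t => c2 * (t - m) ^ 2) t) := by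
        exact integral_congr_ae (Filter.Eventually.of_forall key)
    _ = (∫ t in xm..xM, c1 * (t - m) ^ 2) + (∫ t in L..R, c2 * (t - m) ^ 2) := by
        rw [integral_add i1 i2, integral_indicator measurableSet_Icc,
          integral_indicator measurableSet_Icc,
          integral_Icc_eq_integral_Ioc, integral_Icc_eq_integral_Ioc,
          ← intervalIntegral.integral_of_le hxmxM, ← intervalIntegral.integral_of_le hLR]
    _ = c1 * ((xM - m) ^ 3 - (xm - m) ^ 3) / 3 + c2 * ((R - m) ^ 3 - (L - m) ^ 3) / 3 := by
        rw [ev, ev]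
    _ = h ^ 2 * (((x - H) / h) ^ 2 / (s - 1) + (s + 3) / (3 * (s - 1) ^ 2)) := by
        rw [hc1, hc2, hP, hxmdef, hxMdef, hR, hL, hC, hm]
        have hs0 : s ≠ 0 := by positivity
        field_simp
        ring
end
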